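/- The pair (ρ, υ) is an iteration-congruent retraction: for every f : X → H₀M (Y ⊕ X) and every x ∈ X, ρ(f^‡ x) = ρ((ρ ∘ f)^‡ x), where f^‡ x = ⊔ₙ f⁽ⁿ⁾ x is the least-fixpoint iteration of H₀M. -/

import Mathlib

open scoped ENNReal NNReal
open Classical

universe u v w

/-- Raw trajectories: a duration in `ℝ≥0∞` and a partial evolution `ℝ≥0 → Option X`. -/
abbrev Traj (X : Type u) := ℝ≥0∞ × (ℝ≥0 → Option X)

/-- The flattening condition: if the duration is finite, the evolution is constant
from the duration onwards.  Membership in `H₀M X` means exactly `Flat`. -/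
def Flat {X : Type u} (p : Traj X) : Prop :=
  ∀ t : ℝ≥0, p.1 ≤ (t : ℝ≥0∞) → p.2 t = p.2 p.1.toNNReal

/-- The unit of `H₀M`. -/
def eta {X : Type u} (x : X) : Traj X := (0, fun _ => some x)

/-- The Kleisli lifting `f^†` of the monad `H₀M`. -/
noncomputable def kl {X : Type u} {Y : Type v} (f : X → Traj Y) (p : Traj X) : Traj Y :=
  if p.1 = ⊤ then (p.1, fun t => (p.2 t).bind fun x' => (f x').2 0)
  else
    match p.2 p.1.toNNReal with
    | none => (p.1, fun t => (p.2 t).bind fun x' => (f x').2 0)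
    | some x =>
        (p.1 + (f x).1,
          fun t =>
            if (t : ℝ≥0∞) < p.1 then (p.2 t).bind fun x' => (f x').2 0
            else (f x).2 (t - p.1.toNNReal))

/-- Membership in `H₊ X ⊆ H₀M X`: the evolution is not everywhere `none`, and it is
defined at every time instant strictly below the duration. -/
def memHp {X : Type u} (p : Traj X) : Prop :=
  p.2 ≠ (fun _ => none) ∧ ∀ t : ℝ≥0, (t : ℝ≥0∞) < p.1 → p.2 t ≠ none

/-- Membership in `H X ⊆ H₀M X`: either the evolution is total, or the duration is `∞`
and the domain of the evolution is downward closed. -/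
def memH {X : Type u} (p : Traj X) : Prop :=
  (∀ t, p.2 t ≠ none) ∨
    (p.1 = ⊤ ∧ ∀ s t : ℝ≥0, s ≤ t → p.2 t ≠ none → p.2 s ≠ none)

/-- The approximation order `⊑` on `H₀M X`. -/
def TrajLE {X : Type u} (p q : Traj X) : Prop :=
  p.1 ≤ q.1 ∧ (∀ t, p.2 t ≠ none → q.2 t = p.2 t) ∧
    (p.1 ≠ ⊤ → p.2 p.1.toNNReal ≠ none → p.1 = q.1)

/-- Join of an ω-chain in `H₀M X`: the duration is the supremum of the durations, and
the evolution at `t` is the common value `(c i).2 t` whenever it is `≠ none` for some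
`i`, and `none` otherwise. -/
noncomputable def chainJoin {X : Type u} (c : ℕ → Traj X) : Traj X :=
  (⨆ i, (c i).1,
    fun t => if h : ∃ i, (c i).2 t ≠ none then (c h.choose).2 t else none)

/-- `d⋆ = sup { s < d ∣ e is defined on [0, s) }`. -/
noncomputable def dstar {X : Type u} (p : Traj X) : ℝ≥0∞ :=
  sSup {s : ℝ≥0∞ | s < p.1 ∧ ∀ t : ℝ≥0, (t : ℝ≥0∞) < s → p.2 t ≠ none}

/-- The retraction `ρ : H₀M X → H₀M X` onto `H X`. -/
noncomputable def rho {X : Type u} (p : Traj X) : Traj X :=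
  ((if ∀ t, p.2 t ≠ none then p.1 else ⊤),
    fun t =>
      if (t : ℝ≥0∞) ≤ dstar p then p.2 t
      else if ∀ t', p.2 t' ≠ none then p.2 (dstar p).toNNReal else none)

/-- The iterates `f⁽ⁿ⁾` of `f : X → H₀M (Y ⊕ X)`. -/
noncomputable def iter {X Y : Type u} (f : X → Traj (Y ⊕ X)) : ℕ → X → Traj Y
  | 0, _ => (0, fun _ => none)
  | n + 1, x => kl (Sum.elim eta (iter f n)) (f x)

/-- The least-fixpoint iteration `f^‡ x = ⊔ₙ f⁽ⁿ⁾ x`. -/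
noncomputable def iterStar {X Y : Type u} (f : X → Traj (Y ⊕ X)) (x : X) : Traj Y :=
  chainJoin fun n => iter f n x

/-- `f : X → H₊ (A ⊕ B)` is progressive in `B` (guarded in the second summand). -/
def Prog {X : Type u} {A B : Type v} (f : X → Traj (A ⊕ B)) : Prop :=
  ∀ x, ∃ a : A, (f x).2 0 = some (Sum.inl a)

/-!
Call two trajectories prefix-equivalent when they agree at every time `t` such that one of them
is defined on `[0, t)`, and have equal durations when they are total. A flat trajectory is
prefix-equivalent to its image under `ρ`, and `ρ` identifies prefix-equivalent flat trajectories,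
so it suffices that iteration preserves prefix equivalence. Since `f^‡` is a fixpoint of the
Kleisli lifting, `(g^‡ x)(t)` is compared with every approximant `f⁽ⁿ⁾ x` by induction on `n`:
as long as `f x` has a hole, only its defined prefix is visible, where it coincides with `g x`;
the continuation after the end of `f x` is only reached when `f x` is total, and then
`f x = g x`.
-/

lemma Option.ne_none_of_bind_ne_none {α β : Type*} {o : Option α} {a : α → Option β}
    (h : o.bind a ≠ none) : o ≠ none := by
  rintro rfl
  exact h rfl

lemma Option.bind_eq_of_ne_none {α β : Type*} {o : Option α} {a b : α → Option β}
    (h : o.bind a ≠ none) (hab : ∀ w, o = some w → a w ≠ none → b w = a w) :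
    o.bind b = o.bind a :=
  Option.bind_congr fun w hw => hab w hw (by rwa [hw] at h)

section Trajectories

variable {X : Type u}

def DefinedEverywhere (p : Traj X) : Prop := ∀ t, p.2 t ≠ none

def DefinedBefore (p : Traj X) (t : ℝ≥0) : Prop := ∀ s < t, p.2 s ≠ none

lemma definedEverywhere_of_definedBefore_fst {p : Traj X} (hp : Flat p)
    (hbefore : ∀ s : ℝ≥0, (s : ℝ≥0∞) < p.1 → p.2 s ≠ none) (hd : p.2 p.1.toNNReal ≠ none) :
    DefinedEverywhere p := by
  intro t
  by_cases ht : (t : ℝ≥0∞) < p.1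
  · exact hbefore t ht
  · rwa [hp t (not_lt.mp ht)]

end Trajectories

section Kleisli

variable {X : Type u} {Y : Type v}

lemma kl_fst (k : X → Traj Y) (p : Traj X) :
    (kl k p).1 = p.1 + (p.2 p.1.toNNReal).elim 0 fun w => (k w).1 := by
  unfold kl
  by_cases hd : p.1 = ⊤
  · simp [hd]
  · rw [if_neg hd]
    cases p.2 p.1.toNNReal <;> simp

lemma kl_snd (k : X → Traj Y) {p : Traj X} (hp : Flat p) (t : ℝ≥0) :
    (kl k p).2 t = if (t : ℝ≥0∞) < p.1 then (p.2 t).bind fun w => (k w).2 0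
      else (p.2 p.1.toNNReal).bind fun w => (k w).2 (t - p.1.toNNReal) := by
  unfold kl
  by_cases hd : p.1 = ⊤
  · simp [hd]
  · rw [if_neg hd]
    cases hw : p.2 p.1.toNNReal with
    | none =>
      split_ifs with ht
      · rfl
      · simp [hp t (not_lt.mp ht), hw]
    | some w => rfl

lemma kl_snd_add (k : X → Traj Y) {p : Traj X} (hp : Flat p) (hd : p.1 ≠ ⊤) {w : X}
    (hw : p.2 p.1.toNNReal = some w) (s : ℝ≥0) :
    (kl k p).2 (p.1.toNNReal + s) = (k w).2 s := by
  have hle : p.1 ≤ ((p.1.toNNReal + s : ℝ≥0) : ℝ≥0∞) := by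
    rw [ENNReal.coe_add, ENNReal.coe_toNNReal hd]
    exact le_self_add
  rw [kl_snd k hp, if_neg (not_lt.mpr hle), hw, Option.bind_some, add_tsub_cancel_left]

lemma flat_kl {k : X → Traj Y} {p : Traj X} (hp : Flat p) (hk : ∀ w, Flat (k w)) :
    Flat (kl k p) := by
  intro t ht
  have hfin : (kl k p).1 ≠ ⊤ := ne_top_of_le_ne_top ENNReal.coe_ne_top ht
  rw [kl_fst] at ht hfin ⊢
  obtain ⟨d, hd⟩ : ∃ d : ℝ≥0, p.1 = d := ⟨p.1.toNNReal, (ENNReal.coe_toNNReal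
    (ENNReal.add_ne_top.mp hfin).1).symm⟩
  rw [kl_snd k hp, kl_snd k hp]
  simp only [hd, ENNReal.toNNReal_coe] at ht hfin ⊢
  cases hw : p.2 d with
  | none =>
    simp only [hw, Option.elim_none, add_zero] at ht ⊢
    norm_cast at ht ⊢
    rw [if_neg (not_lt.mpr ht), if_neg (lt_irrefl _)]
    rfl
  | some w =>
    obtain ⟨e, he⟩ : ∃ e : ℝ≥0, (k w).1 = e := ⟨(k w).1.toNNReal, (ENNReal.coe_toNNReal
      (by simpa [hw] using hfin)).symm⟩
    simp only [hw, Option.elim_some, he] at ht ⊢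
    norm_cast at ht ⊢
    have hde : d ≤ d + e := le_self_add
    rw [if_neg (not_lt.mpr (le_trans hde ht)), if_neg (not_lt.mpr hde), Option.bind_some,
      Option.bind_some, add_tsub_cancel_left,
      hk w _ (he ▸ ENNReal.coe_le_coe.mpr (le_tsub_of_add_le_left ht)), he, ENNReal.toNNReal_coe]

lemma kl_snd_of_definedBefore (k : X → Traj Y) {p : Traj X} (hp : Flat p) {t : ℝ≥0}
    (ht : DefinedBefore p t) (hnt : ¬DefinedEverywhere p) :
    (kl k p).2 t = (p.2 t).bind fun w => (k w).2 0 := by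
  rw [kl_snd k hp]
  split_ifs with hlt
  · rfl
  obtain ⟨d, hd⟩ : ∃ d : ℝ≥0, (d : ℝ≥0∞) = p.1 :=
    ⟨_, ENNReal.coe_toNNReal (ne_top_of_le_ne_top ENNReal.coe_ne_top (not_lt.mp hlt))⟩
  rw [← hd, ENNReal.coe_lt_coe, not_lt] at hlt
  rw [← hd, ENNReal.toNNReal_coe]
  rcases hlt.lt_or_eq with hdt | rfl
  · refine absurd (definedEverywhere_of_definedBefore_fst hp (fun s hs => ht s ?_) ?_) hnt
    · exact (ENNReal.coe_lt_coe.mp (hd ▸ hs)).trans hdt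
    · rw [← hd, ENNReal.toNNReal_coe]
      exact ht d hdt
  · rw [tsub_self]

lemma definedBefore_or_definedEverywhere_of_kl (k : X → Traj Y) {p : Traj X} (hp : Flat p)
    {t : ℝ≥0} (h : DefinedBefore (kl k p) t) : DefinedBefore p t ∨ DefinedEverywhere p := by
  by_cases htp : (t : ℝ≥0∞) ≤ p.1
  · refine Or.inl fun s hs => Option.ne_none_of_bind_ne_none (a := fun w => (k w).2 0) ?_
    have := h s hs
    rwa [kl_snd k hp, if_pos (lt_of_lt_of_le (ENNReal.coe_lt_coe.mpr hs) htp)] at this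
  obtain ⟨d, hd⟩ : ∃ d : ℝ≥0, (d : ℝ≥0∞) = p.1 :=
    ⟨_, ENNReal.coe_toNNReal (ne_top_of_lt (not_le.mp htp))⟩
  rw [← hd, not_le, ENNReal.coe_lt_coe] at htp
  refine Or.inr (definedEverywhere_of_definedBefore_fst hp (fun s hs => ?_) ?_)
  · refine Option.ne_none_of_bind_ne_none (a := fun w => (k w).2 0) ?_
    have := h s ((ENNReal.coe_lt_coe.mp (hd ▸ hs)).trans htp)
    rwa [kl_snd k hp, if_pos hs] at this
  · have := h d htp
    rw [kl_snd k hp, ← hd, if_neg (lt_irrefl _), ENNReal.toNNReal_coe] at this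
    rw [← hd, ENNReal.toNNReal_coe]
    exact Option.ne_none_of_bind_ne_none this

lemma definedEverywhere_of_kl (k : X → Traj Y) {p : Traj X} (hp : Flat p)
    (h : DefinedEverywhere (kl k p)) : DefinedEverywhere p := fun t =>
  (definedBefore_or_definedEverywhere_of_kl k hp (t := t + 1) fun s _ => h s).elim
    (fun hb => hb t (lt_add_one t)) (fun he => he t)

lemma definedBefore_continuation_of_kl (k : X → Traj Y) {p : Traj X} (hp : Flat p) {t : ℝ≥0}
    (hpt : p.1 ≤ t) {w : X} (hw : p.2 p.1.toNNReal = some w) (h : DefinedBefore (kl k p) t) :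
    DefinedBefore (k w) (t - p.1.toNNReal) := fun s hs => by
  rw [← kl_snd_add k hp (ne_top_of_le_ne_top ENNReal.coe_ne_top hpt) hw]
  exact h _ (lt_tsub_iff_left.mp hs)

lemma definedEverywhere_continuation_of_kl (k : X → Traj Y) {p : Traj X} (hp : Flat p) (hd : p.1 ≠ ⊤)
    {w : X} (hw : p.2 p.1.toNNReal = some w) (h : DefinedEverywhere (kl k p)) :
    DefinedEverywhere (k w) := fun s => by
  rw [← kl_snd_add k hp hd hw]
  exact h _

end Kleisli

section ChainJoin

variable {X : Type u} (c : ℕ → Traj X)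

lemma exists_snd_eq_chainJoin_snd {t : ℝ≥0} (h : (chainJoin c).2 t ≠ none) :
    ∃ n, (c n).2 t = (chainJoin c).2 t := by
  dsimp only [chainJoin] at h ⊢
  split_ifs at h ⊢ with hex
  · exact ⟨hex.choose, rfl⟩
  · exact absurd rfl h

lemma chainJoin_snd_eq_none {t : ℝ≥0} (h : ∀ n, (c n).2 t = none) :
    (chainJoin c).2 t = none :=
  dif_neg (by simpa using h)

lemma chainJoin_snd_congr {t s : ℝ≥0} (h : ∀ n, (c n).2 t = (c n).2 s) :
    (chainJoin c).2 t = (chainJoin c).2 s := by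
  simp only [chainJoin, h]

lemma chainJoin_snd_eq {c : ℕ → Traj X}
    (hc : ∀ n t, (c n).2 t ≠ none → (c (n + 1)).2 t = (c n).2 t) {n : ℕ} {t : ℝ≥0}
    (h : (c n).2 t ≠ none) : (chainJoin c).2 t = (c n).2 t := by
  have stable : ∀ i, (c i).2 t ≠ none → ∀ m ≥ i, (c m).2 t = (c i).2 t := fun i hi m hm =>
    Nat.le_induction rfl (fun m _ ih => (hc m t (ih ▸ hi)).trans ih) m hm
  have hex : ∃ i, (c i).2 t ≠ none := ⟨n, h⟩
  show (if hex : ∃ i, (c i).2 t ≠ none then (c hex.choose).2 t else none) = _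
  rw [dif_pos hex, ← stable _ hex.choose_spec _ (le_max_left _ n), stable n h _ (le_max_right _ _)]

end ChainJoin

section Iteration

variable {X Y : Type u} {f : X → Traj (Y ⊕ X)}

lemma iter_succ (n : ℕ) (x : X) : iter f (n + 1) x = kl (Sum.elim eta (iter f n)) (f x) := rfl

lemma flat_iter (hf : ∀ x, Flat (f x)) (n : ℕ) (x : X) : Flat (iter f n x) := by
  induction n generalizing x with
  | zero => exact fun _ _ => rfl
  | succ n ih =>
    refine flat_kl (hf x) fun w => ?_
    cases w with
    | inl y => exact fun _ _ => rfl
    | inr z => exact ih z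

lemma iter_succ_snd_eq (hf : ∀ x, Flat (f x)) (n : ℕ) (x : X) (t : ℝ≥0)
    (h : (iter f n x).2 t ≠ none) : (iter f (n + 1) x).2 t = (iter f n x).2 t := by
  induction n generalizing x t with
  | zero => exact absurd rfl h
  | succ n ih =>
    simp only [iter_succ _ x, kl_snd _ (hf x)] at h ⊢
    split_ifs at h ⊢ <;>
    · refine Option.bind_eq_of_ne_none h fun w _ hw => ?_
      cases w with
      | inl y => rfl
      | inr z => exact ih z _ hw

lemma iterStar_snd_eq_iter_snd (hf : ∀ x, Flat (f x)) {n : ℕ} {x : X} {t : ℝ≥0}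
    (h : (iter f n x).2 t ≠ none) : (iterStar f x).2 t = (iter f n x).2 t :=
  chainJoin_snd_eq (fun n t => iter_succ_snd_eq hf n x t) h

lemma flat_iterStar (hf : ∀ x, Flat (f x)) (x : X) : Flat (iterStar f x) := by
  intro t ht
  have hfin : ((iterStar f x).1.toNNReal : ℝ≥0∞) = (iterStar f x).1 :=
    ENNReal.coe_toNNReal (ne_top_of_le_ne_top ENNReal.coe_ne_top ht)
  refine chainJoin_snd_congr _ fun n => ?_
  have hn : (iter f n x).1 ≤ (iterStar f x).1 := le_iSup (fun n => (iter f n x).1) n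
  rw [flat_iter hf n x t (hn.trans ht), flat_iter hf n x _ (hn.trans_eq hfin.symm)]

lemma iterStar_fst (x : X) :
    (iterStar f x).1 = (kl (Sum.elim eta (iterStar f)) (f x)).1 := by
  change ⨆ n, (iter f n x).1 = _
  rw [← sup_iSup_nat_succ, kl_fst]
  simp only [iter_succ, kl_fst, ← ENNReal.add_iSup]
  refine (bot_sup_eq _).trans (congrArg _ ?_)
  cases (f x).2 (f x).1.toNNReal with
  | none => exact iSup_const
  | some w =>
    cases w with
    | inl y => exact iSup_const
    | inr z => rfl

lemma iterStar_snd_eq_bind (hf : ∀ x, Flat (f x)) {x : X} {t s : ℝ≥0} {o : Option (Y ⊕ X)}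
    (h : ∀ n, (iter f (n + 1) x).2 t = o.bind fun w => (Sum.elim eta (iter f n) w).2 s) :
    (iterStar f x).2 t = o.bind fun w => (Sum.elim eta (iterStar f) w).2 s := by
  cases o with
  | none =>
    refine chainJoin_snd_eq_none _ fun n => ?_
    cases n with
    | zero => rfl
    | succ n => simp [h]
  | some w =>
    cases w with
    | inl y => rw [iterStar_snd_eq_iter_snd hf (n := 1) (by simp [h, eta]), h]; rfl
    | inr z =>
      by_cases hz : ∃ n, (iter f n z).2 s ≠ none
      · obtain ⟨n, hn⟩ := hz
        have hx : (iter f (n + 1) x).2 t = (iter f n z).2 s := h n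
        rw [iterStar_snd_eq_iter_snd hf (hx ▸ hn), hx, Option.bind_some, Sum.elim_inr,
          iterStar_snd_eq_iter_snd hf hn]
      · push Not at hz
        rw [Option.bind_some, Sum.elim_inr, iterStar, iterStar, chainJoin_snd_eq_none _ hz]
        refine chainJoin_snd_eq_none _ fun n => ?_
        cases n with
        | zero => rfl
        | succ n => simp [h, hz]

lemma iterStar_eq_kl (hf : ∀ x, Flat (f x)) (x : X) :
    iterStar f x = kl (Sum.elim eta (iterStar f)) (f x) := by
  refine Prod.ext (iterStar_fst x) (funext fun t => ?_)
  rw [kl_snd _ (hf x)]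
  split_ifs with ht
  · exact iterStar_snd_eq_bind hf fun n => by rw [iter_succ, kl_snd _ (hf x), if_pos ht]
  · exact iterStar_snd_eq_bind hf fun n => by rw [iter_succ, kl_snd _ (hf x), if_neg ht]

end Iteration

def PrefixEquiv {X : Type u} (p q : Traj X) : Prop :=
  (∀ t, DefinedBefore p t ∨ DefinedBefore q t → p.2 t = q.2 t) ∧
    (DefinedEverywhere p → p.1 = q.1)

namespace PrefixEquiv

variable {X : Type u} {p q : Traj X}

lemma refl (p : Traj X) : PrefixEquiv p p := ⟨fun _ _ => rfl, fun _ => rfl⟩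

lemma definedBefore (h : PrefixEquiv p q) {t : ℝ≥0} (hq : DefinedBefore q t) :
    DefinedBefore p t := fun s hs => by
  rw [h.1 s (Or.inr fun s' hs' => hq s' (hs'.trans hs))]
  exact hq s hs

lemma definedEverywhere (h : PrefixEquiv p q) (hq : DefinedEverywhere q) : DefinedEverywhere p :=
  fun t => h.definedBefore (fun s _ => hq s) t (lt_add_one t)

lemma symm (h : PrefixEquiv p q) : PrefixEquiv q p :=
  ⟨fun t ht => (h.1 t ht.symm).symm, fun hq => (h.2 (h.definedEverywhere hq)).symm⟩

lemma eq_of_definedEverywhere (h : PrefixEquiv p q) (hp : DefinedEverywhere p) : p = q :=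
  Prod.ext (h.2 hp) (funext fun t => h.1 t (Or.inl fun s _ => hp s))

end PrefixEquiv

section Retraction

variable {X : Type u} {p q : Traj X}

lemma dstar_eq_fst (h : DefinedEverywhere p) : dstar p = p.1 :=
  le_antisymm (sSup_le fun _ hs => hs.1.le)
    (le_of_forall_lt_imp_le_of_dense fun _ hc => le_sSup ⟨hc, fun s _ => h s⟩)

lemma le_dstar_iff (hp : Flat p) (hnt : ¬DefinedEverywhere p) {t : ℝ≥0} :
    (t : ℝ≥0∞) ≤ dstar p ↔ DefinedBefore p t := by
  refine ⟨fun h s hs => ?_, fun h => ?_⟩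
  · obtain ⟨a, ⟨_, ha⟩, hsa⟩ := lt_sSup_iff.mp ((ENNReal.coe_lt_coe.mpr hs).trans_le h)
    exact ha s hsa
  by_cases hlt : (t : ℝ≥0∞) < p.1
  · exact le_sSup ⟨hlt, fun s hs => h s (ENNReal.coe_lt_coe.mp hs)⟩
  obtain ⟨d, hd⟩ : ∃ d : ℝ≥0, (d : ℝ≥0∞) = p.1 :=
    ⟨_, ENNReal.coe_toNNReal (ne_top_of_le_ne_top ENNReal.coe_ne_top (not_lt.mp hlt))⟩
  rw [← hd, ENNReal.coe_lt_coe, not_lt] at hlt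
  rcases hlt.lt_or_eq with hdt | rfl
  · refine absurd (definedEverywhere_of_definedBefore_fst hp (fun s hs => h s ?_) ?_) hnt
    · exact (ENNReal.coe_lt_coe.mp (hd ▸ hs)).trans hdt
    · rw [← hd, ENNReal.toNNReal_coe]
      exact h d hdt
  · refine le_of_forall_lt_imp_le_of_dense fun c hc => le_sSup ⟨hd ▸ hc, fun s hs => h s ?_⟩
    exact ENNReal.coe_lt_coe.mp (hs.trans hc)

lemma rho_of_definedEverywhere (hp : Flat p) (h : DefinedEverywhere p) : rho p = p := by
  refine Prod.ext (if_pos h) (funext fun t => ?_)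
  show (if (t : ℝ≥0∞) ≤ dstar p then p.2 t else if DefinedEverywhere p then _ else none) = _
  rw [dstar_eq_fst h, if_pos h]
  split_ifs with ht
  · rfl
  · exact (hp t (not_le.mp ht).le).symm

lemma rho_of_not_definedEverywhere (hp : Flat p) (h : ¬DefinedEverywhere p) :
    rho p = (⊤, fun t => if DefinedBefore p t then p.2 t else none) := by
  refine Prod.ext (if_neg h) (funext fun t => ?_)
  show (if (t : ℝ≥0∞) ≤ dstar p then p.2 t else if DefinedEverywhere p then _ else none) = _
  simp only [le_dstar_iff hp h, if_neg h]

lemma flat_rho (hp : Flat p) : Flat (rho p) := by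
  by_cases h : DefinedEverywhere p
  · rwa [rho_of_definedEverywhere hp h]
  · rw [rho_of_not_definedEverywhere hp h]
    exact fun t ht => absurd (top_le_iff.mp ht) ENNReal.coe_ne_top

lemma prefixEquiv_rho (hp : Flat p) : PrefixEquiv p (rho p) := by
  by_cases h : DefinedEverywhere p
  · rw [rho_of_definedEverywhere hp h]
    exact PrefixEquiv.refl p
  rw [rho_of_not_definedEverywhere hp h]
  refine ⟨fun t ht => ?_, fun hde => absurd hde h⟩
  suffices hdb : DefinedBefore p t by simp only [if_pos hdb]
  exact ht.elim id fun hr s hs hn => hr s hs (by simp [hn])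

lemma rho_eq_of_prefixEquiv (hp : Flat p) (hq : Flat q) (h : PrefixEquiv p q) :
    rho p = rho q := by
  by_cases hde : DefinedEverywhere p
  · rw [h.eq_of_definedEverywhere hde]
  rw [rho_of_not_definedEverywhere hp hde,
    rho_of_not_definedEverywhere hq fun hq' => hde (h.definedEverywhere hq')]
  refine Prod.ext rfl (funext fun t => ?_)
  by_cases ht : DefinedBefore p t
  · simp only [if_pos ht, if_pos (h.symm.definedBefore ht), h.1 t (Or.inl ht)]
  · simp only [if_neg ht, if_neg fun hq' => ht (h.definedBefore hq')]

end Retraction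

section Congruence

variable {X Y : Type u} {f g : X → Traj (Y ⊕ X)}

lemma iterStar_snd_eq_iter_snd_of_prefixEquiv (hf : ∀ x, Flat (f x)) (hg : ∀ x, Flat (g x))
    (hfg : ∀ x, PrefixEquiv (f x) (g x)) (n : ℕ) (x : X) (t : ℝ≥0)
    (ht : DefinedBefore (iterStar f x) t ∨ DefinedBefore (iterStar g x) t)
    (hn : (iter f n x).2 t ≠ none) : (iterStar g x).2 t = (iter f n x).2 t := by
  induction n generalizing x t with
  | zero => exact absurd rfl hn
  | succ n ih =>
    have hat_zero : ∀ z, (iter f n z).2 0 ≠ none → (iterStar g z).2 0 = (iter f n z).2 0 :=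
      fun z => ih z 0 (Or.inl fun s hs => absurd hs (not_lt_zero (a := s)))
    rw [iter_succ] at hn ⊢
    rw [iterStar_eq_kl hf] at ht
    rw [iterStar_eq_kl hg] at ht ⊢
    by_cases hde : DefinedEverywhere (f x)
    · rw [← (hfg x).eq_of_definedEverywhere hde] at ht ⊢
      rw [kl_snd _ (hf x)] at hn
      rw [kl_snd _ (hf x), kl_snd _ (hf x)]
      split_ifs at hn ⊢ with hlt
      · refine Option.bind_eq_of_ne_none hn fun w _ hw => ?_
        cases w with
        | inl y => rfl
        | inr z => exact hat_zero z hw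
      · refine Option.bind_eq_of_ne_none hn fun w hxw hw => ?_
        cases w with
        | inl y => rfl
        | inr z =>
          have hpt := not_lt.mp hlt
          exact ih z _ (ht.imp (definedBefore_continuation_of_kl _ (hf x) hpt hxw)
            (definedBefore_continuation_of_kl _ (hf x) hpt hxw)) hw
    · have hdb : DefinedBefore (f x) t := by
        rcases ht with hP | hQ
        · exact (definedBefore_or_definedEverywhere_of_kl _ (hf x) hP).resolve_right hde
        · exact ((definedBefore_or_definedEverywhere_of_kl _ (hg x) hQ).imp (hfg x).definedBefore
            (hfg x).definedEverywhere).resolve_right hde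
      rw [kl_snd_of_definedBefore _ (hf x) hdb hde] at hn ⊢
      rw [kl_snd_of_definedBefore _ (hg x) ((hfg x).symm.definedBefore hdb)
        fun h => hde ((hfg x).definedEverywhere h), ← (hfg x).1 t (Or.inl hdb)]
      refine Option.bind_eq_of_ne_none hn fun w _ hw => ?_
      cases w with
      | inl y => rfl
      | inr z => exact hat_zero z hw

lemma iterStar_snd_eq_of_prefixEquiv (hf : ∀ x, Flat (f x)) (hg : ∀ x, Flat (g x))
    (hfg : ∀ x, PrefixEquiv (f x) (g x)) (x : X) (t : ℝ≥0)
    (ht : DefinedBefore (iterStar f x) t ∨ DefinedBefore (iterStar g x) t) :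
    (iterStar f x).2 t = (iterStar g x).2 t := by
  by_cases hP : (iterStar f x).2 t = none
  · by_cases hQ : (iterStar g x).2 t = none
    · rw [hP, hQ]
    obtain ⟨n, hn⟩ := exists_snd_eq_chainJoin_snd _ hQ
    exact (iterStar_snd_eq_iter_snd_of_prefixEquiv hg hf (fun x => (hfg x).symm) n x t ht.symm
      (hn ▸ hQ)).trans hn
  · obtain ⟨n, hn⟩ := exists_snd_eq_chainJoin_snd _ hP
    exact ((iterStar_snd_eq_iter_snd_of_prefixEquiv hf hg hfg n x t ht (hn ▸ hP)).trans hn).symm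

lemma iter_fst_le_iterStar_fst_of_prefixEquiv (hf : ∀ x, Flat (f x)) (hg : ∀ x, Flat (g x))
    (hfg : ∀ x, PrefixEquiv (f x) (g x)) (n : ℕ) (x : X)
    (hx : DefinedEverywhere (iterStar f x)) : (iter f n x).1 ≤ (iterStar g x).1 := by
  induction n generalizing x with
  | zero => exact zero_le
  | succ n ih =>
    rw [iterStar_eq_kl hf] at hx
    have hfx := (hfg x).eq_of_definedEverywhere (definedEverywhere_of_kl _ (hf x) hx)
    rw [iter_succ, iterStar_eq_kl hg, ← hfx, kl_fst, kl_fst]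
    by_cases hd : (f x).1 = ⊤
    · simp [hd]
    refine add_le_add_right ?_ _
    cases hw : (f x).2 (f x).1.toNNReal with
    | none => exact le_rfl
    | some w =>
      cases w with
      | inl y => exact le_rfl
      | inr z => exact ih z (definedEverywhere_continuation_of_kl _ (hf x) hd hw hx)

lemma prefixEquiv_iterStar (hf : ∀ x, Flat (f x)) (hg : ∀ x, Flat (g x))
    (hfg : ∀ x, PrefixEquiv (f x) (g x)) (x : X) :
    PrefixEquiv (iterStar f x) (iterStar g x) := by
  refine ⟨iterStar_snd_eq_of_prefixEquiv hf hg hfg x, fun hP => ?_⟩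
  have hQ : DefinedEverywhere (iterStar g x) := fun t => by
    rw [← iterStar_snd_eq_of_prefixEquiv hf hg hfg x t (Or.inl fun s _ => hP s)]
    exact hP t
  exact le_antisymm (iSup_le fun n => iter_fst_le_iterStar_fst_of_prefixEquiv hf hg hfg n x hP)
    (iSup_le fun n => iter_fst_le_iterStar_fst_of_prefixEquiv hg hf (fun x => (hfg x).symm) n x hQ)

end Congruence

/-- `(ρ, υ)` is an iteration-congruent retraction: `ρ (f^‡ x) = ρ ((ρ ∘ f)^‡ x)`. -/
theorem rho_iteration_congruent {X Y : Type u} (f : X → Traj (Y ⊕ X))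
    (hf : ∀ x, Flat (f x)) (x : X) :
    rho (iterStar f x) = rho (iterStar (fun x' => rho (f x')) x) :=
  rho_eq_of_prefixEquiv (flat_iterStar hf x) (flat_iterStar (fun x' => flat_rho (hf x')) x)
    (prefixEquiv_iterStar hf (fun x' => flat_rho (hf x')) (fun x' => prefixEquiv_rho (hf x')) x)
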